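/- arXiv:1705.04833 — 2 statements merged into one kernel-verified Lean document; each statement's English description precedes it below -/
import Mathlib

section
/- Let a₀ > 0, q₀ > a₀², μ = (q₀ − a₀²)^{1/2}, and define T = −(1/(2(μ² + i a₀ μ)^{1/2}))·[[√q₀, a₀ − iμ],[a₀ − iμ, √q₀]] (a 2×2 complex matrix). Then T is invertible, and for the matrix differential expression G = [[−2a₀, −∂ₓ − √q₀],[−∂ₓ + √q₀, 0]] one has the algebraic identity T·(iG)·T⁻¹ = [[μ, −i∂ₓ],[−i∂ₓ, −μ]] − i a₀ I₂, in the sense that the identity holds for the symbols: for every ξ ∈ ℂ, T·i·[[−2a₀, −ξ − √q₀],[−ξ + √q₀, 0]]·T⁻¹ = [[μ, −iξ],[−iξ, −μ]] − i a₀ I₂. -/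
open Matrix Complex

theorem dwe_similarity (a₀ q₀ μ : ℝ) (ha : 0 < a₀) (hq : a₀ ^ 2 < q₀)
    (hμ : μ = Real.sqrt (q₀ - a₀ ^ 2)) (s : ℂ)
    (hs : s ^ 2 = (μ : ℂ) ^ 2 + Complex.I * a₀ * μ) (hs0 : s ≠ 0)
    (T : Matrix (Fin 2) (Fin 2) ℂ)
    (hT : T = (-(1 / (2 * s))) •
      !![(Real.sqrt q₀ : ℂ), (a₀ : ℂ) - Complex.I * μ;
         (a₀ : ℂ) - Complex.I * μ, (Real.sqrt q₀ : ℂ)]) :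
    IsUnit T ∧
    ∀ ξ : ℂ,
      T * (Complex.I • !![(-2 * a₀ : ℂ), -ξ - Real.sqrt q₀;
                          -ξ + Real.sqrt q₀, 0]) * T⁻¹ =
        !![(μ : ℂ), -Complex.I * ξ; -Complex.I * ξ, -(μ : ℂ)]
          - (Complex.I * a₀) • (1 : Matrix (Fin 2) (Fin 2) ℂ) := by
  have hq0 : (0:ℝ) < q₀ := lt_trans (by positivity) hq
  have hr : ((Real.sqrt q₀ : ℂ)) ^ 2 = (q₀ : ℂ) := by
    norm_cast; exact Real.sq_sqrt hq0.le
  have hμ2 : ((μ : ℂ)) ^ 2 = (q₀ : ℂ) - (a₀ : ℂ) ^ 2 := by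
    norm_cast; rw [hμ]; exact Real.sq_sqrt (by linarith)
  have key : ((Real.sqrt q₀ : ℂ)) * (Real.sqrt q₀ : ℂ) -
      ((a₀ : ℂ) - Complex.I * μ) * ((a₀ : ℂ) - Complex.I * μ) = 2 * s ^ 2 := by
    linear_combination hr - hμ2 - 2 * hs - (μ : ℂ) ^ 2 * Complex.I_sq
  have hdet : T.det = 1 / 2 := by
    rw [hT, Matrix.det_smul, Matrix.det_fin_two_of, Fintype.card_fin, key]
    field_simp
  have hUdet : IsUnit T.det := by rw [hdet]; norm_num
  have hU : IsUnit T := (Matrix.isUnit_iff_isUnit_det T).mpr hUdet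
  refine ⟨hU, fun ξ => ?_⟩
  have : Invertible T := T.invertibleOfIsUnitDet hUdet
  rw [Matrix.mul_inv_eq_iff_eq_mul_of_invertible]
  rw [hT, Matrix.smul_mul, Matrix.mul_smul, Matrix.mul_smul]
  congr 1
  ext i j
  fin_cases i <;> fin_cases j <;>
    simp [Matrix.mul_apply, Fin.sum_univ_two, Matrix.sub_apply, Matrix.smul_apply,
      Matrix.one_apply]
  · linear_combination (-(μ : ℂ) * (Real.sqrt q₀ : ℂ)) * Complex.I_sq
  · linear_combination (-Complex.I) * hr + Complex.I * hμ2 + (-(a₀ : ℂ) * μ) * Complex.I_sq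
  · linear_combination Complex.I * hr + (-Complex.I) * hμ2 + ((a₀ : ℂ) * μ) * Complex.I_sq
  · linear_combination ((μ : ℂ) * (Real.sqrt q₀ : ℂ)) * Complex.I_sq
end

section
/- Let g: 𝔻 → ℂ be holomorphic with g(0) = 1 and |g(w)| ≤ eᴮ for all w ∈ 𝔻, for some B > 0. Then the zeros of g (counted with multiplicity) satisfy the Blaschke condition: ∑_{w: g(w)=0} (1 − |w|) ≤ B. -/
/-!
Jensen's formula on a circle of radius `r < 1` bounds `∑_{|u| ≤ r} ord_u g · log (r / |u|)` by the
circle average of `log |g|` minus `log |g 0| = 0`, hence by `B`. For finitely many zeros, letting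
`r → 1` gives `∑ ord_u g · log (1 / |u|) ≤ B`, and `1 - |u| ≤ log (1 / |u|)`. The sum over all zeros
is the supremum of such finite sums.
-/

open Complex Metric Filter Topology

lemma AnalyticOnNhd.divisor_apply_eq_analyticOrderNatAt {𝕜 E : Type*} [NontriviallyNormedField 𝕜]
    [NormedAddCommGroup E] [NormedSpace 𝕜 E] {f : 𝕜 → E} {U : Set 𝕜} {z : 𝕜}
    (hf : AnalyticOnNhd 𝕜 f U) (hz : z ∈ U) :
    MeromorphicOn.divisor f U z = analyticOrderNatAt f z := by
  rw [MeromorphicOn.AnalyticOnNhd.divisor_apply hf hz]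
  cases h : analyticOrderAt f z <;> simp [analyticOrderNatAt, h]

lemma log_mul_inv_norm_sub_nonneg {c u : ℂ} {R : ℝ} (hu : u ∈ closedBall c R) :
    0 ≤ Real.log (R * ‖c - u‖⁻¹) := by
  rcases eq_or_ne u c with rfl | hne
  · simp
  · have hpos : 0 < ‖c - u‖ := norm_pos_iff.mpr (sub_ne_zero.mpr hne.symm)
    apply Real.log_nonneg
    rw [← div_eq_mul_inv, one_le_div hpos, ← dist_eq_norm, dist_comm]
    exact hu

lemma AnalyticOnNhd.sum_analyticOrderNatAt_mul_log_le_closedBall {f : ℂ → ℂ} {c : ℂ} {R M : ℝ}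
    (hR : 0 < R) (hf : AnalyticOnNhd ℂ f (closedBall c R)) (hfc : f c ≠ 0)
    (hM : ∀ z ∈ sphere c R, Real.log ‖f z‖ ≤ M) (S : Finset ℂ) (hS : ↑S ⊆ closedBall c R) :
    ∑ u ∈ S, analyticOrderNatAt f u * Real.log (R * ‖c - u‖⁻¹) ≤ M - Real.log ‖f c‖ := by
  have hR' : |R| = R := abs_of_pos hR
  have jensen := (hR' ▸ hf).circleAverage_log_norm hR.ne' hfc
  have hmean : Real.circleAverage (fun z ↦ Real.log ‖f z‖) c R ≤ M :=
    Real.circleAverage_mono_on_of_le_circle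
      ((hR' ▸ hf.mono sphere_subset_closedBall).meromorphicOn.circleIntegrable_log_norm)
      (by rwa [hR'])
  rw [hR'] at jensen
  set D := MeromorphicOn.divisor f (closedBall c R)
  have hD : ∀ u ∈ closedBall c R, (D u : ℝ) = analyticOrderNatAt f u := fun u hu ↦ by
    exact_mod_cast hf.divisor_apply_eq_analyticOrderNatAt hu
  set T := (D.finiteSupport (isCompact_closedBall c R)).toFinset
  have hT : Function.support (fun u ↦ D u * Real.log (R * ‖c - u‖⁻¹)) ⊆ T := fun u hu ↦ by
    simpa [T] using left_ne_zero_of_mul hu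
  calc ∑ u ∈ S, analyticOrderNatAt f u * Real.log (R * ‖c - u‖⁻¹)
      = ∑ u ∈ S, D u * Real.log (R * ‖c - u‖⁻¹) :=
        Finset.sum_congr rfl fun u hu ↦ by rw [hD u (hS hu)]
    _ ≤ ∑ u ∈ S ∪ T, D u * Real.log (R * ‖c - u‖⁻¹) := by
        refine Finset.sum_le_sum_of_subset_of_nonneg Finset.subset_union_left fun u _ _ ↦ ?_
        by_cases hu : u ∈ closedBall c R
        · rw [hD u hu]
          exact mul_nonneg (Nat.cast_nonneg _) (log_mul_inv_norm_sub_nonneg hu)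
        · simp [D, hu]
    _ = ∑ᶠ u, D u * Real.log (R * ‖c - u‖⁻¹) :=
        (finsum_eq_sum_of_support_subset _ (hT.trans (by simp))).symm
    _ ≤ M - Real.log ‖f c‖ := by linarith

lemma AnalyticOnNhd.sum_analyticOrderNatAt_mul_log_le_ball {f : ℂ → ℂ} {c : ℂ} {R M : ℝ}
    (hR : 0 < R) (hf : AnalyticOnNhd ℂ f (ball c R)) (hfc : f c ≠ 0)
    (hM : ∀ z ∈ ball c R, Real.log ‖f z‖ ≤ M) (S : Finset ℂ) (hS : ↑S ⊆ ball c R) :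
    ∑ u ∈ S, analyticOrderNatAt f u * Real.log (R * ‖c - u‖⁻¹) ≤ M - Real.log ‖f c‖ := by
  obtain ⟨ρ, hρR, hSρ⟩ := exists_lt_subset_ball S.finite_toSet.isClosed hS
  have hlim : Tendsto (fun r ↦ ∑ u ∈ S, analyticOrderNatAt f u * Real.log (r * ‖c - u‖⁻¹))
      (𝓝[<] R) (𝓝 (∑ u ∈ S, analyticOrderNatAt f u * Real.log (R * ‖c - u‖⁻¹))) := by
    refine tendsto_finsetSum _ fun u _ ↦ ?_
    rcases eq_or_ne u c with rfl | hu
    · simp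
    · have : ‖c - u‖⁻¹ ≠ 0 := by simpa [sub_eq_zero] using hu.symm
      exact ((continuousAt_id.mul continuousAt_const).log (mul_ne_zero hR.ne' this)
        |>.const_mul _).tendsto.mono_left nhdsWithin_le_nhds
  refine le_of_tendsto hlim (Filter.mem_of_superset (Ioo_mem_nhdsLT (max_lt hρR hR))
    fun r ⟨hρr, hrR⟩ ↦ ?_)
  have hBall : closedBall c r ⊆ ball c R := closedBall_subset_ball hrR
  exact (hf.mono hBall).sum_analyticOrderNatAt_mul_log_le_closedBall
    ((le_max_right _ _).trans_lt hρr) hfc (fun z hz ↦ hM z (hBall (sphere_subset_closedBall hz)))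
    S ((hSρ.trans (ball_subset_ball ((le_max_left _ _).trans hρr.le))).trans ball_subset_closedBall)

lemma one_sub_le_log_inv {x : ℝ} (hx : 0 < x) : 1 - x ≤ Real.log x⁻¹ := by
  simpa using Real.one_sub_inv_le_log_of_pos (inv_pos.mpr hx)

lemma AnalyticOnNhd.sum_analyticOrderNatAt_mul_one_sub_norm_le {f : ℂ → ℂ} {M : ℝ}
    (hf : AnalyticOnNhd ℂ f (ball 0 1)) (hf0 : f 0 ≠ 0) (hM : ∀ z ∈ ball 0 1, Real.log ‖f z‖ ≤ M)
    (S : Finset ℂ) (hS : ↑S ⊆ ball (0 : ℂ) 1) :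
    ∑ u ∈ S, analyticOrderNatAt f u * (1 - ‖u‖) ≤ M - Real.log ‖f 0‖ := by
  refine le_trans (Finset.sum_le_sum fun u _ ↦ ?_)
    (hf.sum_analyticOrderNatAt_mul_log_le_ball one_pos hf0 hM S hS)
  rcases eq_or_ne u 0 with rfl | hu
  -- the junk value `log 0 = 0` on the right is harmless because `f` has order `0` at `0`
  · have : analyticOrderNatAt f 0 = 0 := by
      by_contra h
      exact hf0 (apply_eq_zero_of_analyticOrderNatAt_ne_zero h)
    simp [this]
  · simpa using mul_le_mul_of_nonneg_left (one_sub_le_log_inv (norm_pos_iff.mpr hu))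
      (Nat.cast_nonneg (α := ℝ) (analyticOrderNatAt f u))

theorem blaschke_condition_general (g : ℂ → ℂ) (B : ℝ)
    (hol : DifferentiableOn ℂ g (ball (0 : ℂ) 1))
    (h0 : g 0 = 1)
    (hbound : ∀ w ∈ ball (0 : ℂ) 1, ‖g w‖ ≤ Real.exp B)
    (mult : ℂ → ℕ)
    (hmult : ∀ w ∈ ball (0 : ℂ) 1, ∃ h : ℂ → ℂ, AnalyticAt ℂ h w ∧ h w ≠ 0 ∧
      ∀ᶠ z in nhds w, g z = (z - w) ^ (mult w) * h z) :
    ∑' w : {w : ℂ // w ∈ ball (0 : ℂ) 1},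
        (mult w : ENNReal) * ENNReal.ofReal (1 - ‖(w : ℂ)‖) ≤
      ENNReal.ofReal B := by
  have hg : AnalyticOnNhd ℂ g (ball 0 1) := hol.analyticOnNhd isOpen_ball
  have hord : ∀ w ∈ ball (0 : ℂ) 1, analyticOrderNatAt g w = mult w := fun w hw ↦ by
    obtain ⟨h, hh, hhw, hev⟩ := hmult w hw
    simp [analyticOrderNatAt,
      (hg w hw).analyticOrderAt_eq_natCast.mpr ⟨h, hh, hhw, by simpa using hev⟩]
  have hB_nonneg : 0 ≤ B := by simpa [h0] using hbound 0 (mem_ball_self one_pos)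
  have hlog : ∀ z ∈ ball (0 : ℂ) 1, Real.log ‖g z‖ ≤ B := fun z hz ↦ by
    rcases eq_or_ne (g z) 0 with hz0 | hz0
    · simpa [hz0] using hB_nonneg
    · exact (Real.log_le_iff_le_exp (norm_pos_iff.mpr hz0)).mpr (hbound z hz)
  refine ENNReal.summable.tsum_le_of_sum_le fun F ↦ ?_
  have hsum := hg.sum_analyticOrderNatAt_mul_one_sub_norm_le (by simp [h0]) hlog
    (F.map (Function.Embedding.subtype _)) (by simp)
  rw [Finset.sum_map, h0, norm_one, Real.log_one, sub_zero] at hsum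
  have hnonneg : ∀ w ∈ F, 0 ≤ (mult w : ℝ) * (1 - ‖(w : ℂ)‖) := fun w _ ↦
    mul_nonneg (Nat.cast_nonneg _) (by simpa using (mem_ball_zero_iff.mp w.2).le)
  calc ∑ w ∈ F, (mult w : ENNReal) * ENNReal.ofReal (1 - ‖(w : ℂ)‖)
      = ENNReal.ofReal (∑ w ∈ F, (mult w : ℝ) * (1 - ‖(w : ℂ)‖)) := by
        simp [ENNReal.ofReal_sum_of_nonneg hnonneg, ENNReal.ofReal_mul]
    _ ≤ ENNReal.ofReal B := ENNReal.ofReal_le_ofReal <| by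
        simpa [hord _ (Subtype.prop _)] using hsum

theorem blaschke_condition (g : ℂ → ℂ) (B : ℝ) (hB : 0 < B)
    (hol : DifferentiableOn ℂ g (ball (0 : ℂ) 1))
    (h0 : g 0 = 1)
    (hbound : ∀ w ∈ ball (0 : ℂ) 1, ‖g w‖ ≤ Real.exp B)
    (mult : ℂ → ℕ)
    (hmult : ∀ w ∈ ball (0 : ℂ) 1, ∃ h : ℂ → ℂ, AnalyticAt ℂ h w ∧ h w ≠ 0 ∧
      ∀ᶠ z in nhds w, g z = (z - w) ^ (mult w) * h z) :
    ∑' w : {w : ℂ // w ∈ ball (0 : ℂ) 1},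
        (mult w : ENNReal) * ENNReal.ofReal (1 - ‖(w : ℂ)‖) ≤
      ENNReal.ofReal B :=
  blaschke_condition_general g B hol h0 hbound mult hmult
end
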